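/- Let α, β, θ > 0, let λ ∈ [−1,1] with λ ≠ 0, and let p ∈ (0,1). Set A = ((1+λ) − sqrt((1+λ)² − 4pλ))/(2λ). Then A ∈ (0,1), and for every real x₀ and every value G = g(x₀) satisfying G^α = −(1/β)·log(1 − A^{1/θ}), one has (1+λ)(1 − exp(−β G^α))^θ − λ(1 − exp(−β G^α))^{2θ} = p. In other words, the p-th quantile of the GTLD is Q(p) = g^{−1}((−(1/β) log(1 − A^{1/θ}))^{1/α}). -/

import Mathlib

/-!
The CDF is the quadratic transmutation map `u ↦ (1+λ)u − λu²` applied to `H^θ`, where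
`H = 1 − exp(−β G^α)` is the baseline CDF. So `F(G) = p` is solved by inverting three maps in turn:
`A` is the root of `(1+λ)u − λu² = p` lying in `(0,1)`, then `H = A^{1/θ}`, then
`β G^α = −log(1 − H)`.
-/

open Real

namespace GTLD

def transmute (lam u : ℝ) : ℝ := (1 + lam) * u - lam * u ^ 2

lemma mul_rpow_sub_mul_rpow_two_mul_eq_transmute {H : ℝ} (hH : 0 ≤ H) (lam θ : ℝ) :
    (1 + lam) * H ^ θ - lam * H ^ (2 * θ) = transmute lam (H ^ θ) := by
  rw [transmute, mul_comm 2 θ, rpow_mul hH, rpow_two]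

lemma transmute_discrim_nonneg (lam : ℝ) {p : ℝ} (hp : p ∈ Set.Icc (0 : ℝ) 1) :
    0 ≤ (1 + lam) ^ 2 - 4 * p * lam := by
  obtain ⟨hp0, hp1⟩ := hp
  rcases le_total lam 0 with hlam | hlam
  · nlinarith [sq_nonneg (1 + lam)]
  · nlinarith [sq_nonneg (1 - lam)]

lemma transmute_root {lam p : ℝ} (hlam0 : lam ≠ 0) (hp : p ∈ Set.Icc (0 : ℝ) 1) :
    transmute lam (((1 + lam) - √((1 + lam) ^ 2 - 4 * p * lam)) / (2 * lam)) = p := by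
  set s := √((1 + lam) ^ 2 - 4 * p * lam)
  have hdiscrim : discrim (-lam) (1 + lam) (-p) = s * s := by
    rw [discrim, mul_self_sqrt (transmute_discrim_nonneg lam hp)]
    ring
  have hroot := (quadratic_eq_zero_iff (neg_ne_zero.2 hlam0) hdiscrim
    (((1 + lam) - s) / (2 * lam))).2 (Or.inl (by field_simp; ring))
  rw [transmute]
  linarith

lemma transmute_root_mem_Ioo {lam p : ℝ} (hlam : lam ∈ Set.Icc (-1 : ℝ) 1) (hlam0 : lam ≠ 0)
    (hp : p ∈ Set.Ioo (0 : ℝ) 1) :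
    ((1 + lam) - √((1 + lam) ^ 2 - 4 * p * lam)) / (2 * lam) ∈ Set.Ioo (0 : ℝ) 1 := by
  obtain ⟨hlam1, hlam2⟩ := hlam
  obtain ⟨hp0, hp1⟩ := hp
  rcases hlam0.lt_or_gt with hneg | hpos
  · have hlo : 1 + lam < √((1 + lam) ^ 2 - 4 * p * lam) :=
      (lt_sqrt (by linarith)).2 (by nlinarith)
    have hhi : √((1 + lam) ^ 2 - 4 * p * lam) < 1 - lam :=
      (sqrt_lt' (by linarith)).2 (by nlinarith)
    exact ⟨div_pos_of_neg_of_neg (by linarith) (by linarith),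
      (div_lt_one_of_neg (by linarith)).2 (by linarith)⟩
  · have hlo : 1 - lam < √((1 + lam) ^ 2 - 4 * p * lam) :=
      (lt_sqrt (by linarith)).2 (by nlinarith)
    have hhi : √((1 + lam) ^ 2 - 4 * p * lam) < 1 + lam :=
      (sqrt_lt' (by linarith)).2 (by nlinarith)
    exact ⟨div_pos (by linarith) (by linarith), (div_lt_one (by linarith)).2 (by linarith)⟩

lemma one_sub_exp_neg_mul_log_one_sub {β v : ℝ} (hβ : β ≠ 0) (hv : v < 1) :
    1 - exp (-β * (-(1 / β) * log (1 - v))) = v := by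
  rw [show -β * (-(1 / β) * log (1 - v)) = log (1 - v) by field_simp,
    exp_log (by linarith)]
  ring

end GTLD

open GTLD

theorem gtld_quantile (α β θ lam p A : ℝ)
    (hβ : 0 < β) (hθ : 0 < θ)
    (hlam : lam ∈ Set.Icc (-1 : ℝ) 1) (hlam0 : lam ≠ 0)
    (hp : p ∈ Set.Ioo (0 : ℝ) 1)
    (hA : A = ((1 + lam) - Real.sqrt ((1 + lam) ^ 2 - 4 * p * lam)) / (2 * lam)) :
    A ∈ Set.Ioo (0 : ℝ) 1 ∧
      ∀ G : ℝ, G ^ α = -(1 / β) * Real.log (1 - A ^ (1 / θ)) →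
        (1 + lam) * (1 - Real.exp (-β * G ^ α)) ^ θ
          - lam * (1 - Real.exp (-β * G ^ α)) ^ (2 * θ) = p := by
  have hA01 : A ∈ Set.Ioo (0 : ℝ) 1 := hA ▸ transmute_root_mem_Ioo hlam hlam0 hp
  refine ⟨hA01, fun G hG => ?_⟩
  have hbase : 1 - exp (-β * G ^ α) = A ^ θ⁻¹ := by
    rw [hG, ← one_div]
    exact one_sub_exp_neg_mul_log_one_sub hβ.ne'
      (rpow_lt_one hA01.1.le hA01.2 (one_div_pos.2 hθ))
  rw [mul_rpow_sub_mul_rpow_two_mul_eq_transmute (hbase ▸ (rpow_pos_of_pos hA01.1 _).le), hbase,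
    rpow_inv_rpow hA01.1.le hθ.ne', hA]
  exact transmute_root hlam0 (Set.Ioo_subset_Icc_self hp)
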